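/- Let 0 < α < 1/2 and let u, v be mean-zero functions in L²(T). Define T^{+,+}(u,v)(x) = ∑_{ξη(ξ+η)≠0} σ^{+,+}(ξ,η)·û(ξ)·v̂(η)·e^{i(ξ+η)x} where |σ^{+,+}(ξ,η)| ≲ 1/(⟨ξ+η⟩^α·⟨ξ⟩^{1−α}·⟨η⟩^{1−α}). Then ‖T^{+,+}(u,v)‖_{H¹(T)} ≲ ‖u‖_{L²(T)}·‖v‖_{L²(T)}. -/

import Mathlib

noncomputable def jap (x : ℝ) : ℝ := Real.sqrt (1 + x^2)

/-- `T^{+,+}(u,v)` at the level of Fourier coefficients: the `n`-th Fourier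
coefficient is `∑_{ξ+η=n} σ(ξ,η) û(ξ) v̂(η)`. -/
noncomputable def Tcoef (σ : ℤ → ℤ → ℂ) (u v : ℤ → ℂ) (n : ℤ) : ℂ :=
  ∑' ξ : ℤ, σ ξ (n - ξ) * u ξ * v (n - ξ)

/-!
Since `⟨ξ+η⟩ ≤ ⟨ξ⟩ + ⟨η⟩ ≤ 2 max (⟨ξ⟩, ⟨η⟩)`, the bound on the symbol gives
`⟨ξ+η⟩ |σ(ξ,η)| ≲ ⟨ξ⟩^(α-1) + ⟨η⟩^(α-1)`. Hence `⟨n⟩ |T(u,v)^(n)|` is dominated by two sums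
`∑_ξ |f ξ| k(n-ξ) |g(n-ξ)|` with `{f, g} = {û, v̂}` and `k = ⟨·⟩^(α-1)`, which is in `ℓ²`
because `α < 1/2`. Cauchy–Schwarz in `ξ` bounds the square of such a sum by
`‖g‖₂² ∑_ξ |f ξ|² k(n-ξ)²`, and summing over `n` gives `‖f‖₂² ‖k‖₂² ‖g‖₂²`.
The estimates are done in `ℝ≥0∞`, where no summability has to be tracked.
-/

open ENNReal

theorem jap_pos (x : ℝ) : 0 < jap x := Real.sqrt_pos.2 (by positivity)

theorem abs_le_jap (x : ℝ) : |x| ≤ jap x := by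
  rw [← Real.sqrt_sq_eq_abs]
  exact Real.sqrt_le_sqrt (by linarith)

theorem jap_add_le (x y : ℝ) : jap (x + y) ≤ jap x + jap y := by
  have hx : jap x ^ 2 = 1 + x ^ 2 := Real.sq_sqrt (by positivity)
  have hy : jap y ^ 2 = 1 + y ^ 2 := Real.sq_sqrt (by positivity)
  have hxy : x * y ≤ jap x * jap y := calc
    x * y ≤ |x| * |y| := abs_mul x y ▸ le_abs_self _
    _ ≤ jap x * jap y := mul_le_mul (abs_le_jap x) (abs_le_jap y) (abs_nonneg y) (jap_pos x).le
  exact Real.sqrt_le_iff.2 ⟨by linarith [jap_pos x, jap_pos y], by nlinarith⟩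

theorem summable_jap_rpow {q : ℝ} (hq : q < -1) : Summable (fun n : ℤ => jap n ^ q) := by
  refine (Real.summable_abs_int_rpow (b := -q) (by linarith)).of_norm_bounded_eventually ?_
  filter_upwards [Filter.eventually_cofinite_ne 0] with n hn
  have hn : (0 : ℝ) < |(n : ℝ)| := by simpa using hn
  rw [Real.norm_of_nonneg (Real.rpow_nonneg (jap_pos n).le q), neg_neg]
  exact Real.rpow_le_rpow_of_nonpos hn (abs_le_jap n) (by linarith)

theorem rpow_div_rpow_mul_rpow_le_of_le_add {a b c p : ℝ} (ha : 0 < a) (hb : 0 < b) (hc : 0 ≤ c)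
    (hcab : c ≤ a + b) (hp : 0 ≤ p) :
    c ^ p / (a ^ p * b ^ p) ≤ 2 ^ p * (a ^ (-p) + b ^ (-p)) := by
  wlog hab : a ≤ b generalizing a b
  · simpa only [mul_comm, add_comm] using this hb ha (by linarith) (by linarith)
  calc c ^ p / (a ^ p * b ^ p) ≤ (2 * b) ^ p / (a ^ p * b ^ p) := by
        gcongr; linarith
    _ = 2 ^ p * a ^ (-p) := by
        rw [Real.mul_rpow (by norm_num) hb.le, Real.rpow_neg ha.le]
        field_simp
    _ ≤ 2 ^ p * (a ^ (-p) + b ^ (-p)) := by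
        gcongr
        exact le_add_of_nonneg_right (by positivity)

theorem jap_add_mul_le_of_le_one_div {α s x y : ℝ} (hα : α ≤ 1)
    (hs : s ≤ 1 / (jap (x + y) ^ α * jap x ^ (1 - α) * jap y ^ (1 - α))) :
    jap (x + y) * s ≤ 2 ^ (1 - α) * (jap x ^ (α - 1) + jap y ^ (α - 1)) := by
  have hxy := jap_pos (x + y)
  calc jap (x + y) * s
      ≤ jap (x + y) * (1 / (jap (x + y) ^ α * jap x ^ (1 - α) * jap y ^ (1 - α))) := by gcongr
    _ = jap (x + y) ^ (1 - α) / (jap x ^ (1 - α) * jap y ^ (1 - α)) := by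
        rw [Real.rpow_sub hxy, Real.rpow_one]
        field_simp
    _ ≤ 2 ^ (1 - α) * (jap x ^ (α - 1) + jap y ^ (α - 1)) := by
        simpa only [neg_sub] using rpow_div_rpow_mul_rpow_le_of_le_add (jap_pos x) (jap_pos y)
          hxy.le (jap_add_le x y) (sub_nonneg.2 hα)

namespace ENNReal

theorem add_sq_le_two_mul (a b : ℝ≥0∞) : (a + b) ^ 2 ≤ 2 * (a ^ 2 + b ^ 2) := by
  have h := rpow_add_le_mul_rpow_add_rpow a b (p := 2) one_le_two
  norm_num at h
  exact h

theorem tsum_mul_sq_le_sq_mul_sq {ι : Type*} (f g : ι → ℝ≥0∞) :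
    (∑' i, f i * g i) ^ 2 ≤ (∑' i, f i ^ 2) * ∑' i, g i ^ 2 := by
  rw [ENNReal.tsum_eq_iSup_sum, iSup_pow]
  refine iSup_le fun s => ?_
  calc (∑ i ∈ s, f i * g i) ^ 2
      ≤ ((∑ i ∈ s, f i ^ (2 : ℝ)) ^ (1 / 2 : ℝ) * (∑ i ∈ s, g i ^ (2 : ℝ)) ^ (1 / 2 : ℝ)) ^ 2 :=
        pow_le_pow_left' (inner_le_Lp_mul_Lq s f g Real.HolderConjugate.two_two) 2
    _ = (∑ i ∈ s, f i ^ 2) * ∑ i ∈ s, g i ^ 2 := by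
        rw [mul_pow, ← rpow_natCast, ← rpow_natCast, ← rpow_mul, ← rpow_mul]
        norm_num
    _ ≤ (∑' i, f i ^ 2) * ∑' i, g i ^ 2 := by gcongr <;> exact ENNReal.sum_le_tsum s

theorem tsum_sq_tsum_mul_sub_le {G : Type*} [AddCommGroup G] (f k g : G → ℝ≥0∞) :
    ∑' n, (∑' ξ, f ξ * (k (n - ξ) * g (n - ξ))) ^ 2 ≤
      (∑' ξ, f ξ ^ 2) * (∑' η, k η ^ 2) * ∑' η, g η ^ 2 := by
  have hg (n : G) : ∑' ξ, g (n - ξ) ^ 2 = ∑' η, g η ^ 2 :=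
    (Equiv.subLeft n).tsum_eq (fun η => g η ^ 2)
  have hk (ξ : G) : ∑' n, k (n - ξ) ^ 2 = ∑' η, k η ^ 2 :=
    (Equiv.subRight ξ).tsum_eq (fun η => k η ^ 2)
  calc ∑' n, (∑' ξ, f ξ * (k (n - ξ) * g (n - ξ))) ^ 2
      ≤ ∑' n, (∑' ξ, (f ξ * k (n - ξ)) ^ 2) * ∑' ξ, g (n - ξ) ^ 2 := by
        gcongr with n
        simpa only [mul_assoc] using
          tsum_mul_sq_le_sq_mul_sq (fun ξ => f ξ * k (n - ξ)) (fun ξ => g (n - ξ))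
    _ = (∑' n, ∑' ξ, f ξ ^ 2 * k (n - ξ) ^ 2) * ∑' η, g η ^ 2 := by
        simp only [hg, ENNReal.tsum_mul_right, mul_pow]
    _ = (∑' ξ, f ξ ^ 2) * (∑' η, k η ^ 2) * ∑' η, g η ^ 2 := by
        rw [ENNReal.tsum_comm]
        simp only [ENNReal.tsum_mul_left, hk, ENNReal.tsum_mul_right]

end ENNReal

theorem tsum_enorm_sq_eq_ofReal {ι E : Type*} [SeminormedAddCommGroup E] {f : ι → E}
    (hf : Summable fun i => ‖f i‖ ^ 2) :
    ∑' i, ‖f i‖ₑ ^ 2 = ENNReal.ofReal (∑' i, ‖f i‖ ^ 2) := by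
  rw [ENNReal.ofReal_tsum_of_nonneg (fun _ => by positivity) hf]
  exact tsum_congr fun i => by rw [ENNReal.ofReal_pow (norm_nonneg _), ofReal_norm]

theorem enorm_mul_enorm_Tcoef_le (σ : ℤ → ℤ → ℂ) (u v : ℤ → ℂ) (w : ℤ → ℝ) (k : ℤ → ℝ≥0∞)
    (hσ : ∀ ξ η, ‖w (ξ + η)‖ₑ * ‖σ ξ η‖ₑ ≤ k ξ + k η) (n : ℤ) :
    ‖w n‖ₑ * ‖Tcoef σ u v n‖ₑ ≤
      ∑' ξ, ‖v ξ‖ₑ * (k (n - ξ) * ‖u (n - ξ)‖ₑ) + ∑' ξ, ‖u ξ‖ₑ * (k (n - ξ) * ‖v (n - ξ)‖ₑ) := by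
  have hswap : ∑' ξ, k ξ * ‖u ξ‖ₑ * ‖v (n - ξ)‖ₑ = ∑' ξ, ‖v ξ‖ₑ * (k (n - ξ) * ‖u (n - ξ)‖ₑ) := by
    rw [← (Equiv.subLeft n).tsum_eq]
    refine tsum_congr fun ξ => ?_
    simp only [Equiv.subLeft_apply, sub_sub_self]
    ring
  calc ‖w n‖ₑ * ‖Tcoef σ u v n‖ₑ
      ≤ ‖w n‖ₑ * ∑' ξ, ‖σ ξ (n - ξ) * u ξ * v (n - ξ)‖ₑ := by
        gcongr
        exact enorm_tsum_le_tsum_enorm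
    _ = ∑' ξ, ‖w (ξ + (n - ξ))‖ₑ * ‖σ ξ (n - ξ)‖ₑ * (‖u ξ‖ₑ * ‖v (n - ξ)‖ₑ) := by
        rw [← ENNReal.tsum_mul_left]
        simp only [add_sub_cancel, enorm_mul, mul_assoc]
    _ ≤ ∑' ξ, (k ξ + k (n - ξ)) * (‖u ξ‖ₑ * ‖v (n - ξ)‖ₑ) := by
        gcongr with ξ
        exact hσ ξ (n - ξ)
    _ = _ := by
        rw [← hswap]
        simp only [add_mul, ENNReal.tsum_add]
        congr 1 <;> exact tsum_congr fun ξ => by ring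

theorem tsum_enorm_mul_enorm_Tcoef_sq_le (σ : ℤ → ℤ → ℂ) (u v : ℤ → ℂ) (w : ℤ → ℝ)
    (k : ℤ → ℝ≥0∞) (hσ : ∀ ξ η, ‖w (ξ + η)‖ₑ * ‖σ ξ η‖ₑ ≤ k ξ + k η) :
    ∑' n, (‖w n‖ₑ * ‖Tcoef σ u v n‖ₑ) ^ 2 ≤
      4 * (∑' n, k n ^ 2) * (∑' n, ‖u n‖ₑ ^ 2) * ∑' n, ‖v n‖ₑ ^ 2 := by
  calc ∑' n, (‖w n‖ₑ * ‖Tcoef σ u v n‖ₑ) ^ 2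
      ≤ ∑' n, 2 * ((∑' ξ, ‖v ξ‖ₑ * (k (n - ξ) * ‖u (n - ξ)‖ₑ)) ^ 2
          + (∑' ξ, ‖u ξ‖ₑ * (k (n - ξ) * ‖v (n - ξ)‖ₑ)) ^ 2) := by
        gcongr with n
        exact (pow_le_pow_left' (enorm_mul_enorm_Tcoef_le σ u v w k hσ n) 2).trans
          (add_sq_le_two_mul _ _)
    _ ≤ 2 * ((∑' n, ‖v n‖ₑ ^ 2) * (∑' n, k n ^ 2) * (∑' n, ‖u n‖ₑ ^ 2)
          + (∑' n, ‖u n‖ₑ ^ 2) * (∑' n, k n ^ 2) * (∑' n, ‖v n‖ₑ ^ 2)) := by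
        rw [ENNReal.tsum_mul_left, ENNReal.tsum_add]
        gcongr <;> exact tsum_sq_tsum_mul_sub_le _ _ _
    _ = 4 * (∑' n, k n ^ 2) * (∑' n, ‖u n‖ₑ ^ 2) * ∑' n, ‖v n‖ₑ ^ 2 := by ring

theorem sqrt_tsum_sq_mul_norm_Tcoef_sq_le (σ : ℤ → ℤ → ℂ) (u v : ℤ → ℂ) (w k : ℤ → ℝ)
    (hk : Summable fun n => ‖k n‖ ^ 2) (hu : Summable fun n => ‖u n‖ ^ 2)
    (hv : Summable fun n => ‖v n‖ ^ 2) (hσ : ∀ ξ η, ‖w (ξ + η)‖ * ‖σ ξ η‖ ≤ ‖k ξ‖ + ‖k η‖) :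
    √(∑' n, w n ^ 2 * ‖Tcoef σ u v n‖ ^ 2) ≤
      2 * √(∑' n, ‖k n‖ ^ 2) * √(∑' n, ‖u n‖ ^ 2) * √(∑' n, ‖v n‖ ^ 2) := by
  have hσ' (ξ η : ℤ) : ‖w (ξ + η)‖ₑ * ‖σ ξ η‖ₑ ≤ ‖k ξ‖ₑ + ‖k η‖ₑ := by
    rw [← ofReal_norm, ← ofReal_norm, ← ofReal_norm, ← ofReal_norm,
      ← ENNReal.ofReal_mul (norm_nonneg _), ← ENNReal.ofReal_add (norm_nonneg _) (norm_nonneg _)]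
    exact ENNReal.ofReal_le_ofReal (hσ ξ η)
  have hE := tsum_enorm_mul_enorm_Tcoef_sq_le σ u v w (fun n => ‖k n‖ₑ) hσ'
  rw [tsum_enorm_sq_eq_ofReal hk, tsum_enorm_sq_eq_ofReal hu, tsum_enorm_sq_eq_ofReal hv] at hE
  have hsum : ∑' n, w n ^ 2 * ‖Tcoef σ u v n‖ ^ 2 ≤
      4 * (∑' n, ‖k n‖ ^ 2) * (∑' n, ‖u n‖ ^ 2) * ∑' n, ‖v n‖ ^ 2 := by
    have hfin (n : ℤ) : (‖w n‖ₑ * ‖Tcoef σ u v n‖ₑ) ^ 2 ≠ ∞ := by finiteness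
    calc ∑' n, w n ^ 2 * ‖Tcoef σ u v n‖ ^ 2
        = (∑' n, (‖w n‖ₑ * ‖Tcoef σ u v n‖ₑ) ^ 2).toReal := by
          rw [ENNReal.tsum_toReal_eq hfin]
          simp [mul_pow]
      _ ≤ _ := by
          refine (ENNReal.toReal_mono (by finiteness) hE).trans_eq ?_
          simp [ENNReal.toReal_ofReal, tsum_nonneg, sq_nonneg]
  calc √(∑' n, w n ^ 2 * ‖Tcoef σ u v n‖ ^ 2)
      ≤ √(4 * (∑' n, ‖k n‖ ^ 2) * (∑' n, ‖u n‖ ^ 2) * ∑' n, ‖v n‖ ^ 2) := Real.sqrt_le_sqrt hsum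
    _ = _ := by
        rw [Real.sqrt_mul (by positivity), Real.sqrt_mul (by positivity),
          Real.sqrt_mul (by norm_num), show (4 : ℝ) = 2 ^ 2 by norm_num, Real.sqrt_sq zero_le_two]

theorem TPP_L2_L2_to_H1_general (α : ℝ) (hα' : α < 1/2) :
    ∃ C : ℝ, 0 < C ∧
      ∀ (σ : ℤ → ℤ → ℂ) (u v : ℤ → ℂ),
        u 0 = 0 → v 0 = 0 →
        Summable (fun n => ‖u n‖^2) → Summable (fun n => ‖v n‖^2) →
        (∀ ξ η : ℤ, ξ * η * (ξ + η) = 0 → σ ξ η = 0) →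
        (∀ ξ η : ℤ, ‖σ ξ η‖ ≤
            1 / (jap ((ξ : ℝ) + η) ^ α * jap ξ ^ (1 - α) * jap η ^ (1 - α))) →
        Real.sqrt (∑' n : ℤ, jap n ^ 2 * ‖Tcoef σ u v n‖^2)
          ≤ C * Real.sqrt (∑' n : ℤ, ‖u n‖^2) * Real.sqrt (∑' n : ℤ, ‖v n‖^2) := by
  set k : ℤ → ℝ := fun n => 2 ^ (1 - α) * jap n ^ (α - 1)
  have hk_pos (n : ℤ) : 0 < k n := by have := jap_pos n; positivity
  have hk : Summable fun n => ‖k n‖ ^ 2 := by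
    refine ((summable_jap_rpow (q := 2 * α - 2) (by linarith)).mul_left ((2 ^ (1 - α)) ^ 2)).congr
      fun n => ?_
    rw [Real.norm_of_nonneg (hk_pos n).le, mul_pow, ← Real.rpow_natCast (jap n ^ _),
      ← Real.rpow_mul (jap_pos n).le]
    ring_nf
  refine ⟨2 * √(∑' n, ‖k n‖ ^ 2), ?_, fun σ u v _ _ hu hv _ hσ => ?_⟩
  · have hk0 : 0 < ‖k 0‖ ^ 2 := pow_pos (norm_pos_iff.2 (hk_pos 0).ne') 2
    exact mul_pos two_pos (Real.sqrt_pos.2 (hk.tsum_pos (fun _ => by positivity) 0 hk0))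
  refine sqrt_tsum_sq_mul_norm_Tcoef_sq_le σ u v (fun n => jap n) k hk hu hv fun ξ η => ?_
  rw [Real.norm_of_nonneg (jap_pos _).le, Real.norm_of_nonneg (hk_pos ξ).le,
    Real.norm_of_nonneg (hk_pos η).le, ← mul_add]
  push_cast
  exact jap_add_mul_le_of_le_one_div (by linarith) (hσ ξ η)

theorem TPP_L2_L2_to_H1 (α : ℝ) (hα : 0 < α) (hα' : α < 1/2) :
    ∃ C : ℝ, 0 < C ∧
      ∀ (σ : ℤ → ℤ → ℂ) (u v : ℤ → ℂ),
        u 0 = 0 → v 0 = 0 →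
        Summable (fun n => ‖u n‖^2) → Summable (fun n => ‖v n‖^2) →
        (∀ ξ η : ℤ, ξ * η * (ξ + η) = 0 → σ ξ η = 0) →
        (∀ ξ η : ℤ, ‖σ ξ η‖ ≤
            1 / (jap ((ξ : ℝ) + η) ^ α * jap ξ ^ (1 - α) * jap η ^ (1 - α))) →
        Real.sqrt (∑' n : ℤ, jap n ^ 2 * ‖Tcoef σ u v n‖^2)
          ≤ C * Real.sqrt (∑' n : ℤ, ‖u n‖^2) * Real.sqrt (∑' n : ℤ, ‖v n‖^2) :=
  TPP_L2_L2_to_H1_general α hα'
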